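/- (Sufficient condition for identifiability.) A nonparametric conditional independence bivariate mixture model P(x,y) = ∑_{i=1}^C w_i f^(i)_x(x) f^(i)_y(y) with C ≥ 2 components is uniquely identifiable up to permutation of component labels if for every i ∈ {1,…,C} and each variate t ∈ {x,y}: esssup_t [ w_i f^(i)_t(t) / P_t(t) ] = 1, where P_t is the marginal mixture density of variate t. -/

import Mathlib

/-!
On a region where component `i` carries almost all of the `x`-marginal mass, the conditional law
of `y` given `x` is close to `f⁽ⁱ⁾_y`; in any other representation `∑ⱼ w'ⱼ g⁽ʲ⁾_x ⊗ g⁽ʲ⁾_y` of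
the same mixture that conditional law is a convex combination of the `g⁽ʲ⁾_y`. Passing to the limit
(compactness of the simplex) gives `f⁽ⁱ⁾_y = ∑ⱼ Aᵢⱼ g⁽ʲ⁾_y` with `A` row-stochastic, and likewise
`f⁽ⁱ⁾_x = ∑ⱼ Bᵢⱼ g⁽ʲ⁾_x`. The same regions show that the `f⁽ⁱ⁾` are linearly independent, so they
have bounded dual test functions; pairing the mixture identity with them yields
`Bᵀ diag(w) A = diag(w')` with `A`, `B` invertible. As all entries are nonnegative and `w > 0`,
`Bᵢⱼ Aᵢₖ = 0` for `j ≠ k`, which forces `A` and `B` to be one and the same permutation matrix.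
-/

open MeasureTheory Filter Topology
open scoped ENNReal Matrix

section StochasticMatrices

variable {ι : Type*} [Fintype ι] [DecidableEq ι]

theorem tendsto_single_of_mem_stdSimplex {x : ℕ → ι → ℝ} {i : ι}
    (hx : ∀ n, x n ∈ stdSimplex ℝ ι) (hi : Tendsto (fun n => x n i) atTop (𝓝 1)) :
    Tendsto x atTop (𝓝 (Pi.single i 1)) := by
  refine tendsto_pi_nhds.2 fun k => ?_
  obtain rfl | hk := eq_or_ne k i
  · simpa using hi
  · have hle n : x n k ≤ 1 - x n i := by
      have := Finset.add_le_sum (fun j _ => (hx n).1 j) (Finset.mem_univ k) (Finset.mem_univ i) hk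
      linarith [(hx n).2]
    simpa [hk] using squeeze_zero (fun n => (hx n).1 k) hle (by simpa using hi.const_sub 1)

theorem tendsto_sum_mul_of_tendsto_single {β : Type*} {l : Filter β} {x : β → ι → ℝ} {i : ι}
    (hx : Tendsto x l (𝓝 (Pi.single i 1))) (a : ι → ℝ) :
    Tendsto (fun n => ∑ k, a k * x n k) l (𝓝 (a i)) := by
  simpa [Pi.single_apply] using
    tendsto_finsetSum Finset.univ fun k _ => (tendsto_pi_nhds.1 hx k).const_mul (a k)

theorem eq_single_of_mem_stdSimplex {a : ι → ℝ} {t : ι} (ha : a ∈ stdSimplex ℝ ι)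
    (h : ∀ k ≠ t, a k = 0) : a = Pi.single t 1 := by
  have hat : a t = 1 := by
    rw [← ha.2, Finset.sum_eq_single t (fun k _ hk => h k hk) (by simp)]
  funext k
  obtain rfl | hk := eq_or_ne k t
  · simp [hat]
  · simp [h k hk, hk]

theorem exists_eq_single_of_mul_eq_zero {a b : ι → ℝ} (ha : a ∈ stdSimplex ℝ ι)
    (hb : b ∈ stdSimplex ℝ ι) (h : ∀ j k, j ≠ k → b j * a k = 0) :
    ∃ t, a = Pi.single t 1 ∧ b = Pi.single t 1 := by
  obtain ⟨t, ht⟩ : ∃ t, b t ≠ 0 := by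
    by_contra! h0
    simpa [h0] using hb.2
  have ha' := eq_single_of_mem_stdSimplex ha fun k hk =>
    (mul_eq_zero.1 (h t k hk.symm)).resolve_left ht
  refine ⟨t, ha', eq_single_of_mem_stdSimplex hb fun j hj =>
    (mul_eq_zero.1 (h j t hj)).resolve_right ?_⟩
  simp [ha']

theorem transpose_mul_mul_eq_of_mul_eq_one {R : Type*} [CommRing R] {A B U V D D' : Matrix ι ι R}
    (hBU : B * U = 1) (hAV : A * V = 1) (h : Uᵀ * D' * V = D) : Bᵀ * D * A = D' := by
  calc Bᵀ * D * A = (U * B)ᵀ * D' * (V * A) := by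
        rw [← h, Matrix.transpose_mul]
        simp only [Matrix.mul_assoc]
    _ = D' := by rw [mul_eq_one_comm.1 hBU, mul_eq_one_comm.1 hAV]; simp

theorem exists_perm_of_transpose_mul_diagonal_mul_eq {A B V : Matrix ι ι ℝ} {w w' : ι → ℝ}
    (hA : ∀ i, A i ∈ stdSimplex ℝ ι) (hB : ∀ i, B i ∈ stdSimplex ℝ ι) (hw : ∀ i, 0 < w i)
    (hAV : A * V = 1) (h : Bᵀ * Matrix.diagonal w * A = Matrix.diagonal w') :
    ∃ σ : Equiv.Perm ι,
      ∀ j, w' j = w (σ j) ∧ A (σ j) = Pi.single j 1 ∧ B (σ j) = Pi.single j 1 := by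
  have hentry j k : ∑ i, B i j * w i * A i k = Matrix.diagonal w' j k := by
    rw [← h, Matrix.mul_apply]
    simp only [Matrix.mul_diagonal, Matrix.transpose_apply]
  have hoff i j k (hjk : j ≠ k) : B i j * A i k = 0 := by
    have hterm := (Finset.sum_eq_zero_iff_of_nonneg fun t _ =>
      mul_nonneg (mul_nonneg ((hB t).1 j) (hw t).le) ((hA t).1 k)).1
      ((hentry j k).trans (Matrix.diagonal_apply_ne _ hjk)) i (Finset.mem_univ i)
    have : w i * (B i j * A i k) = 0 := by linarith
    exact (mul_eq_zero.1 this).resolve_left (hw i).ne'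
  choose τ hτA hτB using fun i => exists_eq_single_of_mul_eq_zero (hA i) (hB i) (hoff i)
  have hτ : Function.Injective τ := by
    intro i₁ i₂ he
    have hrow i : V (τ i) = (1 : Matrix ι ι ℝ) i := by
      rw [← hAV]
      ext m
      simp [Matrix.mul_apply, hτA i, Pi.single_apply]
    have h1 := congrFun (hrow i₂) i₁
    rw [← he, hrow i₁, Matrix.one_apply_eq] at h1
    by_contra hne
    simp [Matrix.one_apply_ne (Ne.symm hne)] at h1
  set σ := (Equiv.ofBijective τ hτ.bijective_of_finite).symm
  have hτσ j : τ (σ j) = j := (Equiv.ofBijective τ _).apply_symm_apply j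
  refine ⟨σ, fun j => ⟨?_, by rw [hτA, hτσ], by rw [hτB, hτσ]⟩⟩
  rw [← Matrix.diagonal_apply_eq w' j, ← hentry, Finset.sum_eq_single (σ j)]
  · simp [hτA, hτB, hτσ]
  · intro i _ hi
    have : τ i ≠ j := fun hij => hi (hτ (hij.trans (hτσ j).symm))
    simp [hτA, this]
  · simp

end StochasticMatrices

section Mixture

variable {α : Type*} [MeasurableSpace α] {μ : Measure α} {C : ℕ}

theorem measure_lt_ne_zero_of_lt_essSup {g : α → ℝ} {c : ℝ} (hc₀ : 0 ≤ c)
    (hc : c < essSup g μ) : μ {x | c < g x} ≠ 0 := by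
  intro h
  rw [essSup_eq_sInf] at hc
  by_cases hbdd : BddBelow {a | μ {x | a < g x} = 0}
  · exact (csInf_le hbdd h).not_gt hc
  · rw [Real.sInf_of_not_bddBelow hbdd] at hc
    exact hc.not_ge hc₀

structure IsProbDensity (μ : Measure α) (f : α → ℝ) : Prop where
  measurable : Measurable f
  nonneg : ∀ x, 0 ≤ f x
  integral_eq_one : ∫ x, f x ∂μ = 1

theorem IsProbDensity.integrable {f : α → ℝ} (hf : IsProbDensity μ f) : Integrable f μ :=
  Integrable.of_integral_ne_zero (by simp [hf.integral_eq_one])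

def mixture (w : Fin C → ℝ) (f : Fin C → α → ℝ) (x : α) : ℝ := ∑ k, w k * f k x

def IsAnchored (μ : Measure α) (w : Fin C → ℝ) (f : Fin C → α → ℝ) (i : Fin C) : Prop :=
  essSup (fun x => w i * f i x / mixture w f x)
    (μ.withDensity fun x => ENNReal.ofReal (mixture w f x)) = 1

noncomputable def localShare (μ : Measure α) (w : Fin C → ℝ) (f : Fin C → α → ℝ) (S : Set α)
    (k : Fin C) : ℝ :=
  (∫ x in S, w k * f k x ∂μ) / ∫ x in S, mixture w f x ∂μ

variable {w : Fin C → ℝ} {f : Fin C → α → ℝ}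

theorem integrable_mixture (hf : ∀ k, IsProbDensity μ (f k)) : Integrable (mixture w f) μ :=
  integrable_finsetSum _ fun k _ => (hf k).integrable.const_mul (w k)

theorem mixture_nonneg (hw : ∀ k, 0 ≤ w k) (hf : ∀ k, IsProbDensity μ (f k)) (x : α) :
    0 ≤ mixture w f x :=
  Finset.sum_nonneg fun k _ => mul_nonneg (hw k) ((hf k).nonneg x)

theorem sum_mul_localShare (hf : ∀ k, IsProbDensity μ (f k)) (S : Set α) (a : Fin C → ℝ) :
    ∑ k, a k * localShare μ w f S k =
      (∫ x in S, ∑ k, a k * (w k * f k x) ∂μ) / ∫ x in S, mixture w f x ∂μ := by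
  rw [integral_finsetSum _ fun k _ => (((hf k).integrable.const_mul _).const_mul _).restrict,
    Finset.sum_div]
  simp only [localShare, integral_const_mul, mul_div_assoc]

theorem localShare_mem_stdSimplex (hw : ∀ k, 0 ≤ w k) (hf : ∀ k, IsProbDensity μ (f k))
    {S : Set α} (hS : ∫ x in S, mixture w f x ∂μ ≠ 0) :
    localShare μ w f S ∈ stdSimplex ℝ (Fin C) := by
  refine ⟨fun k => div_nonneg ?_ ?_, ?_⟩
  · exact integral_nonneg fun x => mul_nonneg (hw k) ((hf k).nonneg x)
  · exact integral_nonneg (mixture_nonneg hw hf)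
  · have hsum := sum_mul_localShare (w := w) hf S 1
    simp only [Pi.one_apply, one_mul] at hsum
    rw [hsum]
    exact div_self hS

theorem IsAnchored.exists_set_mul_integral_le (hw : ∀ k, 0 ≤ w k)
    (hf : ∀ k, IsProbDensity μ (f k)) {i : Fin C} (hi : IsAnchored μ w f i) {c : ℝ}
    (hc₀ : 0 ≤ c) (hc₁ : c < 1) :
    ∃ S, 0 < ∫ x in S, mixture w f x ∂μ ∧
      c * ∫ x in S, mixture w f x ∂μ ≤ ∫ x in S, w i * f i x ∂μ := by
  have hmix_meas : Measurable (mixture w f) :=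
    Finset.measurable_sum _ fun k _ => (hf k).measurable.const_mul (w k)
  set S := {x | c < w i * f i x / mixture w f x}
  have hS : MeasurableSet S :=
    measurableSet_lt measurable_const (((hf i).measurable.const_mul _).div hmix_meas)
  have hSpos : (μ.withDensity fun x => ENNReal.ofReal (mixture w f x)) S ≠ 0 :=
    measure_lt_ne_zero_of_lt_essSup hc₀ (hi.symm ▸ hc₁)
  rw [withDensity_apply _ hS, ← ofReal_integral_eq_lintegral_ofReal
    (integrable_mixture hf).restrict (ae_of_all _ (mixture_nonneg hw hf))] at hSpos
  refine ⟨S, ENNReal.ofReal_pos.1 (pos_iff_ne_zero.2 hSpos), ?_⟩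
  rw [← integral_const_mul]
  refine setIntegral_mono_on ((integrable_mixture hf).const_mul c).restrict
    ((hf i).integrable.const_mul _).restrict hS fun x hx => ?_
  rcases (mixture_nonneg hw hf x).eq_or_lt with h | h
  · rw [← h, mul_zero]
    exact mul_nonneg (hw i) ((hf i).nonneg x)
  · exact ((lt_div_iff₀ h).1 hx).le

theorem IsAnchored.exists_seq_tendsto_localShare (hw : ∀ k, 0 ≤ w k)
    (hf : ∀ k, IsProbDensity μ (f k)) {i : Fin C} (hi : IsAnchored μ w f i) :
    ∃ S : ℕ → Set α, (∀ n, 0 < ∫ x in S n, mixture w f x ∂μ) ∧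
      Tendsto (fun n => localShare μ w f (S n)) atTop (𝓝 (Pi.single i 1)) := by
  choose S hpos hbig using fun n : ℕ =>
    hi.exists_set_mul_integral_le hw hf (c := n / (n + 1)) (by positivity)
      ((div_lt_one (by positivity)).2 (lt_add_one _))
  have hmem n := localShare_mem_stdSimplex hw hf (hpos n).ne'
  refine ⟨S, hpos, tendsto_single_of_mem_stdSimplex hmem ?_⟩
  exact tendsto_of_tendsto_of_tendsto_of_le_of_le (tendsto_natCast_div_add_atTop 1)
    tendsto_const_nhds (fun n => (le_div_iff₀ (hpos n)).2 (hbig n))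
    fun n => (mem_Icc_of_mem_stdSimplex (hmem n) i).2

theorem IsAnchored.weight_pos (hw : ∀ k, 0 ≤ w k) (hf : ∀ k, IsProbDensity μ (f k)) {i : Fin C}
    (hi : IsAnchored μ w f i) : 0 < w i := by
  obtain ⟨S, -, hS⟩ := hi.exists_seq_tendsto_localShare hw hf
  refine (hw i).lt_of_ne fun h => ?_
  have hzero n : localShare μ w f (S n) i = 0 := by simp [localShare, ← h]
  simpa [hzero] using tendsto_pi_nhds.1 hS i

theorem eq_zero_of_ae_sum_mul_eq_zero (hw : ∀ k, 0 ≤ w k) (hf : ∀ k, IsProbDensity μ (f k))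
    (hanch : ∀ i, IsAnchored μ w f i) {c : Fin C → ℝ} (hc : ∀ᵐ x ∂μ, ∑ k, c k * f k x = 0) :
    c = 0 := by
  funext i
  have hwpos k : 0 < w k := (hanch k).weight_pos hw hf
  obtain ⟨S, -, hS⟩ := (hanch i).exists_seq_tendsto_localShare hw hf
  have hzero n : ∑ k, c k / w k * localShare μ w f (S n) k = 0 := by
    have hcancel x : ∑ k, c k / w k * (w k * f k x) = ∑ k, c k * f k x :=
      Finset.sum_congr rfl fun k _ => by field_simp [(hwpos k).ne']
    rw [sum_mul_localShare hf]
    simp only [hcancel]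
    rw [integral_eq_zero_of_ae (ae_restrict_of_ae hc), zero_div]
  have hlim := tendsto_sum_mul_of_tendsto_single hS fun k => c k / w k
  simp only [hzero, tendsto_const_nhds_iff] at hlim
  exact (div_eq_zero_iff.1 hlim.symm).resolve_right (hwpos i).ne'

end Mixture

section Duality

variable {α : Type*} [MeasurableSpace α] {μ : Measure α} {C : ℕ}

theorem MeasureTheory.Integrable.mul_of_memLp_top {f φ : α → ℝ} (hf : Integrable f μ)
    (hφ : MemLp φ ∞ μ) :
    Integrable (fun x => f x * φ x) μ :=
  hf.mul_of_top_left hφ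

noncomputable def pairing (μ : Measure α) (g φ : Fin C → α → ℝ) : Matrix (Fin C) (Fin C) ℝ :=
  Matrix.of fun j l => ∫ x, g j x * φ l x ∂μ

def momentRange (μ : Measure α) (f : Fin C → α → ℝ) (hf : ∀ k, Integrable (f k) μ) :
    Submodule ℝ (Fin C → ℝ) where
  carrier := {v | ∃ φ, MemLp φ ∞ μ ∧ v = fun k => ∫ x, f k x * φ x ∂μ}
  add_mem' := by
    rintro _ _ ⟨φ, hφ, rfl⟩ ⟨ψ, hψ, rfl⟩
    refine ⟨φ + ψ, hφ.add hψ, funext fun k => ?_⟩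
    simp only [Pi.add_apply, mul_add]
    exact (integral_add ((hf k).mul_of_memLp_top hφ) ((hf k).mul_of_memLp_top hψ)).symm
  zero_mem' := ⟨0, MemLp.zero, by ext; simp⟩
  smul_mem' := by
    rintro r _ ⟨φ, hφ, rfl⟩
    refine ⟨r • φ, hφ.const_smul r, funext fun k => ?_⟩
    simp only [Pi.smul_apply, smul_eq_mul, mul_left_comm _ r, integral_const_mul]

theorem Measurable.exists_memLp_top_mul_eq_abs {h : α → ℝ} (hh : Measurable h) :
    ∃ s : α → ℝ, MemLp s ∞ μ ∧ ∀ x, h x * s x = |h x| := by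
  refine ⟨fun x => if 0 ≤ h x then 1 else -1, memLp_top_of_bound ?_ 1 (ae_of_all _ fun x => ?_),
    fun x => ?_⟩
  · exact (Measurable.ite (measurableSet_le measurable_const hh) measurable_const
      measurable_const).aestronglyMeasurable
  · split_ifs <;> simp
  · by_cases hx : 0 ≤ h x
    · simp [hx, abs_of_nonneg hx]
    · simp [hx, abs_of_neg (not_le.1 hx)]

theorem momentRange_eq_top {f : Fin C → α → ℝ} (hf_meas : ∀ k, Measurable (f k))
    (hf : ∀ k, Integrable (f k) μ)
    (hindep : ∀ c : Fin C → ℝ, (∀ᵐ x ∂μ, ∑ k, c k * f k x = 0) → c = 0) :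
    momentRange μ f hf = ⊤ := by
  by_contra hR
  obtain ⟨ℓ, hℓ, hRℓ⟩ := (momentRange μ f hf).exists_le_ker_of_lt_top (lt_top_iff_ne_top.2 hR)
  set c : Fin C → ℝ := fun k => ℓ fun j => if k = j then 1 else 0
  have hℓc v : ℓ v = ∑ k, c k * v k := by
    rw [LinearMap.pi_apply_eq_sum_univ ℓ]
    exact Finset.sum_congr rfl fun k _ => mul_comm _ _
  obtain ⟨s, hs, hhs⟩ := (Finset.measurable_sum _ fun k _ => (hf_meas k).const_mul (c k) :
    Measurable fun x => ∑ k, c k * f k x).exists_memLp_top_mul_eq_abs (μ := μ)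
  have habs : ∫ x, |∑ k, c k * f k x| ∂μ = 0 := calc
    _ = ∫ x, ∑ k, c k * (f k x * s x) ∂μ := by simp only [← hhs, Finset.sum_mul, mul_assoc]
    _ = ℓ fun k => ∫ x, f k x * s x ∂μ := by
      rw [hℓc, integral_finsetSum _ fun k _ => ((hf k).mul_of_memLp_top hs).const_mul _]
      simp only [integral_const_mul]
    _ = 0 := hRℓ ⟨s, hs, rfl⟩
  have hc : c = 0 := hindep c <| by
    filter_upwards [(integral_eq_zero_iff_of_nonneg (fun x => abs_nonneg _)
      (integrable_finsetSum _ fun k _ => (hf k).const_mul _).abs).1 habs] with x hx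
    exact abs_eq_zero.1 hx
  exact hℓ (LinearMap.ext fun v => by simp [hℓc, hc])

theorem exists_pairing_eq_one {f : Fin C → α → ℝ} (hf_meas : ∀ k, Measurable (f k))
    (hf : ∀ k, Integrable (f k) μ)
    (hindep : ∀ c : Fin C → ℝ, (∀ᵐ x ∂μ, ∑ k, c k * f k x = 0) → c = 0) :
    ∃ φ : Fin C → α → ℝ, (∀ l, MemLp (φ l) ∞ μ) ∧ pairing μ f φ = 1 := by
  choose φ hφ hφf using fun l : Fin C => (momentRange_eq_top hf_meas hf hindep ▸
    Submodule.mem_top : (fun k => (1 : Matrix (Fin C) (Fin C) ℝ) k l) ∈ momentRange μ f hf)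
  exact ⟨φ, hφ, Matrix.ext fun k l => (congrFun (hφf l) k).symm⟩

theorem pairing_eq_mul_of_ae_eq_sum {F g φ : Fin C → α → ℝ} {B : Matrix (Fin C) (Fin C) ℝ}
    (hg : ∀ j, Integrable (g j) μ) (hφ : ∀ l, MemLp (φ l) ∞ μ)
    (hF : ∀ i, F i =ᵐ[μ] fun x => ∑ j, B i j * g j x) :
    pairing μ F φ = B * pairing μ g φ := by
  ext i l
  simp only [pairing, Matrix.mul_apply, Matrix.of_apply]
  have hFφ : (fun x => F i x * φ l x) =ᵐ[μ] fun x => ∑ j, B i j * (g j x * φ l x) := by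
    filter_upwards [hF i] with x hx
    simp only [hx, Finset.sum_mul, mul_assoc]
  rw [integral_congr_ae hFφ]
  exact (integral_finsetSum _ fun j _ => ((hg j).mul_of_memLp_top (hφ l)).const_mul _).trans
    (Finset.sum_congr rfl fun j _ => integral_const_mul _ _)

end Duality

section Bivariate

variable {α β : Type*} {C : ℕ} {w w' : Fin C → ℝ} {f f' : Fin C → α → ℝ} {g g' : Fin C → β → ℝ}

def mixture₂ (w : Fin C → ℝ) (f : Fin C → α → ℝ) (g : Fin C → β → ℝ) (p : α × β) : ℝ :=
  ∑ k, w k * f k p.1 * g k p.2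

theorem mixture₂_swap (q : β × α) : mixture₂ w g f q = mixture₂ w f g q.swap :=
  Finset.sum_congr rfl fun _ _ => mul_right_comm _ _ _

variable [MeasurableSpace β] {ν : Measure β}

theorem integral_mixture₂_right (hg : ∀ k, IsProbDensity ν (g k)) (x : α) :
    ∫ y, mixture₂ w f g (x, y) ∂ν = mixture w f x := by
  simp only [mixture₂]
  rw [integral_finsetSum _ fun k _ => (hg k).integrable.const_mul _]
  simp only [integral_const_mul, (hg _).integral_eq_one, mul_one, mixture]

variable [MeasurableSpace α] {μ : Measure α}

theorem ae_mixture₂_swap [SFinite μ] [SFinite ν]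
    (h : ∀ᵐ p ∂μ.prod ν, mixture₂ w' f' g' p = mixture₂ w f g p) :
    ∀ᵐ q ∂ν.prod μ, mixture₂ w' g' f' q = mixture₂ w g f q := by
  filter_upwards [Measure.measurePreserving_swap.quasiMeasurePreserving.ae h] with q hq
  exact (mixture₂_swap q).trans (hq.trans (mixture₂_swap q).symm)

theorem ae_mixture_eq_of_ae_prod [SFinite ν] (hg : ∀ k, IsProbDensity ν (g k))
    (hg' : ∀ k, IsProbDensity ν (g' k))
    (h : ∀ᵐ p ∂μ.prod ν, mixture₂ w' f' g' p = mixture₂ w f g p) :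
    ∀ᵐ x ∂μ, mixture w' f' x = mixture w f x := by
  filter_upwards [Measure.ae_ae_of_ae_prod h] with x hx
  rw [← integral_mixture₂_right hg', ← integral_mixture₂_right hg, integral_congr_ae hx]

theorem IsAnchored.exists_mem_stdSimplex_ae_eq_sum [SFinite μ] [SFinite ν]
    (hw : ∀ k, 0 ≤ w k) (hw' : ∀ k, 0 ≤ w' k)
    (hf : ∀ k, IsProbDensity μ (f k)) (hf' : ∀ k, IsProbDensity μ (f' k))
    (hg : ∀ k, IsProbDensity ν (g k)) (hg' : ∀ k, IsProbDensity ν (g' k)) {i : Fin C}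
    (hi : IsAnchored μ w f i) (h : ∀ᵐ p ∂μ.prod ν, mixture₂ w' f' g' p = mixture₂ w f g p) :
    ∃ a ∈ stdSimplex ℝ (Fin C), g i =ᵐ[ν] fun y => ∑ j, a j * g' j y := by
  obtain ⟨S, hpos, hlim⟩ := hi.exists_seq_tendsto_localShare hw hf
  have hmass n : ∫ x in S n, mixture w' f' x ∂μ = ∫ x in S n, mixture w f x ∂μ :=
    integral_congr_ae (ae_restrict_of_ae (ae_mixture_eq_of_ae_prod hg hg' h))
  have hmem n : localShare μ w' f' (S n) ∈ stdSimplex ℝ (Fin C) :=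
    localShare_mem_stdSimplex hw' hf' ((hmass n).trans_ne (hpos n).ne')
  have hshare : ∀ᵐ y ∂ν, ∀ n, ∑ k, g k y * localShare μ w f (S n) k =
      ∑ j, g' j y * localShare μ w' f' (S n) j := by
    refine ae_all_iff.2 fun n => ?_
    filter_upwards [Measure.ae_ae_of_ae_prod (ae_mixture₂_swap h)] with y hy
    rw [sum_mul_localShare hf, sum_mul_localShare hf', hmass]
    congr 1
    refine integral_congr_ae ((ae_restrict_of_ae hy).mono fun x hx => ?_)
    simp only [mixture₂] at hx
    calc ∑ k, g k y * (w k * f k x) = ∑ k, w k * g k y * f k x :=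
          Finset.sum_congr rfl fun _ _ => by ring
      _ = ∑ j, w' j * g' j y * f' j x := hx.symm
      _ = ∑ j, g' j y * (w' j * f' j x) := Finset.sum_congr rfl fun _ _ => by ring
  obtain ⟨a, ha, φ, hφ, hlim'⟩ := (isCompact_stdSimplex ℝ (Fin C)).tendsto_subseq hmem
  refine ⟨a, ha, ?_⟩
  filter_upwards [hshare] with y hy
  refine tendsto_nhds_unique (tendsto_sum_mul_of_tendsto_single
    (hlim.comp hφ.tendsto_atTop) (g · y)) ?_
  simp only [Function.comp_apply, hy, mul_comm (g' _ y)]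
  exact tendsto_finsetSum _ fun j _ => (tendsto_pi_nhds.1 hlim' j).mul_const _

theorem transpose_pairing_mul_diagonal_mul_pairing [SFinite μ] [SFinite ν] {φ : Fin C → α → ℝ}
    {ψ : Fin C → β → ℝ} (hf : ∀ k, Integrable (f k) μ) (hg : ∀ k, Integrable (g k) ν)
    (hφ : ∀ l, MemLp (φ l) ∞ μ) (hψ : ∀ m, MemLp (ψ m) ∞ ν) (l m : Fin C) :
    ((pairing μ f φ)ᵀ * Matrix.diagonal w * pairing ν g ψ) l m =
      ∫ p, mixture₂ w f g p * (φ l p.1 * ψ m p.2) ∂μ.prod ν := by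
  have hexpand p : mixture₂ w f g p * (φ l p.1 * ψ m p.2) =
      ∑ k, w k * (f k p.1 * φ l p.1 * (g k p.2 * ψ m p.2)) := by
    simp only [mixture₂, Finset.sum_mul]
    exact Finset.sum_congr rfl fun k _ => by ring
  simp only [hexpand]
  rw [integral_finsetSum _ fun k _ => (((hf k).mul_of_memLp_top (hφ l)).mul_prod
    ((hg k).mul_of_memLp_top (hψ m))).const_mul (w k), Matrix.mul_apply]
  refine Finset.sum_congr rfl fun k _ => ?_
  rw [integral_const_mul, integral_prod_mul (fun x => f k x * φ l x) fun y => g k y * ψ m y]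
  simp only [Matrix.mul_diagonal, Matrix.transpose_apply, pairing, Matrix.of_apply]
  ring

theorem transpose_pairing_mul_diagonal_mul_pairing_congr [SFinite μ] [SFinite ν]
    {φ : Fin C → α → ℝ} {ψ : Fin C → β → ℝ}
    (hf : ∀ k, Integrable (f k) μ) (hg : ∀ k, Integrable (g k) ν)
    (hf' : ∀ k, Integrable (f' k) μ) (hg' : ∀ k, Integrable (g' k) ν)
    (hφ : ∀ l, MemLp (φ l) ∞ μ) (hψ : ∀ m, MemLp (ψ m) ∞ ν)
    (h : ∀ᵐ p ∂μ.prod ν, mixture₂ w' f' g' p = mixture₂ w f g p) :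
    (pairing μ f' φ)ᵀ * Matrix.diagonal w' * pairing ν g' ψ =
      (pairing μ f φ)ᵀ * Matrix.diagonal w * pairing ν g ψ := by
  ext l m
  rw [transpose_pairing_mul_diagonal_mul_pairing hf' hg' hφ hψ,
    transpose_pairing_mul_diagonal_mul_pairing hf hg hφ hψ]
  exact integral_congr_ae (h.mono fun p hp => by simp only [hp])

end Bivariate

section Identifiability

variable {α β : Type*} [MeasurableSpace α] [MeasurableSpace β] {μ : Measure α} {ν : Measure β}
  {C : ℕ} {w w' : Fin C → ℝ} {fx gx : Fin C → α → ℝ} {fy gy : Fin C → β → ℝ}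

theorem exists_mul_eq_one_and_transpose_mul_diagonal_mul_eq [SFinite μ] [SFinite ν]
    {A B : Matrix (Fin C) (Fin C) ℝ} (hw : ∀ k, 0 ≤ w k)
    (hfx : ∀ k, IsProbDensity μ (fx k)) (hfy : ∀ k, IsProbDensity ν (fy k))
    (hgx : ∀ k, Integrable (gx k) μ) (hgy : ∀ k, Integrable (gy k) ν)
    (hanch_x : ∀ i, IsAnchored μ w fx i) (hanch_y : ∀ i, IsAnchored ν w fy i)
    (h : ∀ᵐ p ∂μ.prod ν, mixture₂ w' gx gy p = mixture₂ w fx fy p)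
    (hBx : ∀ i, fx i =ᵐ[μ] fun x => ∑ j, B i j * gx j x)
    (hAy : ∀ i, fy i =ᵐ[ν] fun y => ∑ j, A i j * gy j y) :
    (∃ V, A * V = 1) ∧ Bᵀ * Matrix.diagonal w * A = Matrix.diagonal w' := by
  obtain ⟨φ, hφ, hφfx⟩ := exists_pairing_eq_one (fun k => (hfx k).measurable)
    (fun k => (hfx k).integrable) fun _ => eq_zero_of_ae_sum_mul_eq_zero hw hfx hanch_x
  obtain ⟨ψ, hψ, hψfy⟩ := exists_pairing_eq_one (fun k => (hfy k).measurable)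
    (fun k => (hfy k).integrable) fun _ => eq_zero_of_ae_sum_mul_eq_zero hw hfy hanch_y
  have hBU : B * pairing μ gx φ = 1 := by rw [← pairing_eq_mul_of_ae_eq_sum hgx hφ hBx, hφfx]
  have hAV : A * pairing ν gy ψ = 1 := by rw [← pairing_eq_mul_of_ae_eq_sum hgy hψ hAy, hψfy]
  refine ⟨⟨_, hAV⟩, transpose_mul_mul_eq_of_mul_eq_one hBU hAV ?_⟩
  rw [transpose_pairing_mul_diagonal_mul_pairing_congr (fun k => (hfx k).integrable)
    (fun k => (hfy k).integrable) hgx hgy hφ hψ h, hφfx, hψfy]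
  simp

theorem exists_perm_of_mixture₂_ae_eq [SFinite μ] [SFinite ν]
    (hw : ∀ k, 0 ≤ w k) (hw' : ∀ k, 0 ≤ w' k)
    (hfx : ∀ k, IsProbDensity μ (fx k)) (hfy : ∀ k, IsProbDensity ν (fy k))
    (hgx : ∀ k, IsProbDensity μ (gx k)) (hgy : ∀ k, IsProbDensity ν (gy k))
    (hanch_x : ∀ i, IsAnchored μ w fx i) (hanch_y : ∀ i, IsAnchored ν w fy i)
    (h : ∀ᵐ p ∂μ.prod ν, mixture₂ w' gx gy p = mixture₂ w fx fy p) :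
    ∃ σ : Equiv.Perm (Fin C), ∀ i, w' i = w (σ i) ∧ gx i =ᵐ[μ] fx (σ i) ∧ gy i =ᵐ[ν] fy (σ i) := by
  choose A hA hAy using fun i =>
    (hanch_x i).exists_mem_stdSimplex_ae_eq_sum hw hw' hfx hgx hfy hgy h
  choose B hB hBx using fun i =>
    (hanch_y i).exists_mem_stdSimplex_ae_eq_sum hw hw' hfy hgy hfx hgx (ae_mixture₂_swap h)
  obtain ⟨⟨V, hAV⟩, hBWA⟩ := exists_mul_eq_one_and_transpose_mul_diagonal_mul_eq
    (A := Matrix.of A) (B := Matrix.of B) hw hfx hfy (fun k => (hgx k).integrable)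
    (fun k => (hgy k).integrable) hanch_x hanch_y h hBx hAy
  obtain ⟨σ, hσ⟩ := exists_perm_of_transpose_mul_diagonal_mul_eq hA hB
    (fun i => (hanch_x i).weight_pos hw hfx) hAV hBWA
  refine ⟨σ, fun j => ⟨(hσ j).1, ?_, ?_⟩⟩
  · filter_upwards [hBx (σ j)] with x hx
    simp [hx, (hσ j).2.2, Pi.single_apply]
  · filter_upwards [hAy (σ j)] with y hy
    simp [hy, (hσ j).2.1, Pi.single_apply]

end Identifiability

theorem statement_13_general {C : ℕ}
    {Xt Yt : Type*} [MeasurableSpace Xt] [MeasurableSpace Yt]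
    (μ : Measure Xt) (ν : Measure Yt) [SigmaFinite μ] [SigmaFinite ν]
    (w : Fin C → ℝ) (fx : Fin C → Xt → ℝ) (fy : Fin C → Yt → ℝ)
    (hw_nonneg : ∀ i, 0 ≤ w i)
    (hfx_meas : ∀ i, Measurable (fx i)) (hfy_meas : ∀ i, Measurable (fy i))
    (hfx_nonneg : ∀ i x, 0 ≤ fx i x) (hfy_nonneg : ∀ i y, 0 ≤ fy i y)
    (hfx_one : ∀ i, ∫ x, fx i x ∂μ = 1) (hfy_one : ∀ i, ∫ y, fy i y ∂ν = 1)
    -- sufficient condition: each component completely dominates somewhere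
    (hsuff_x : ∀ i : Fin C,
      essSup (fun x => w i * fx i x / (∑ k, w k * fx k x))
          (μ.withDensity (fun x => ENNReal.ofReal (∑ k, w k * fx k x))) = 1)
    (hsuff_y : ∀ i : Fin C,
      essSup (fun y => w i * fy i y / (∑ k, w k * fy k y))
          (ν.withDensity (fun y => ENNReal.ofReal (∑ k, w k * fy k y))) = 1) :
    -- identifiability up to permutation of the component labels:
    ∀ (w' : Fin C → ℝ) (gx : Fin C → Xt → ℝ) (gy : Fin C → Yt → ℝ),
      (∀ i, 0 ≤ w' i) → ∑ i, w' i = 1 →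
      (∀ i, Measurable (gx i)) → (∀ i, Measurable (gy i)) →
      (∀ i x, 0 ≤ gx i x) → (∀ i y, 0 ≤ gy i y) →
      (∀ i, ∫ x, gx i x ∂μ = 1) → (∀ i, ∫ y, gy i y ∂ν = 1) →
      (∀ᵐ p ∂(μ.prod ν),
        ∑ i, w' i * gx i p.1 * gy i p.2 = ∑ i, w i * fx i p.1 * fy i p.2) →
      ∃ σ : Equiv.Perm (Fin C),
        ∀ i, w' i = w (σ i) ∧ gx i =ᵐ[μ] fx (σ i) ∧ gy i =ᵐ[ν] fy (σ i) := by
  intro w' gx gy hw' _ hgx_meas hgy_meas hgx_nonneg hgy_nonneg hgx_one hgy_one hae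
  exact exists_perm_of_mixture₂_ae_eq hw_nonneg hw'
    (fun i => ⟨hfx_meas i, hfx_nonneg i, hfx_one i⟩)
    (fun i => ⟨hfy_meas i, hfy_nonneg i, hfy_one i⟩)
    (fun i => ⟨hgx_meas i, hgx_nonneg i, hgx_one i⟩)
    (fun i => ⟨hgy_meas i, hgy_nonneg i, hgy_one i⟩)
    hsuff_x hsuff_y hae

/-- Sufficient condition for identifiability of a nonparametric conditional
independence bivariate mixture model (Theorem 2 of the paper): if for every
component i and each variate the essential supremum (w.r.t. the mixture
marginal measure) of wᵢ f⁽ⁱ⁾ / P equals 1, where P is the mixture marginal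
density, then the instance is uniquely identifiable up to permutation of the
component labels. -/
theorem statement_13 {C : ℕ} (hC : 2 ≤ C)
    {Xt Yt : Type*} [MeasurableSpace Xt] [MeasurableSpace Yt]
    (μ : Measure Xt) (ν : Measure Yt) [SigmaFinite μ] [SigmaFinite ν]
    (w : Fin C → ℝ) (fx : Fin C → Xt → ℝ) (fy : Fin C → Yt → ℝ)
    (hw_nonneg : ∀ i, 0 ≤ w i) (hw_sum : ∑ i, w i = 1)
    (hfx_meas : ∀ i, Measurable (fx i)) (hfy_meas : ∀ i, Measurable (fy i))
    (hfx_nonneg : ∀ i x, 0 ≤ fx i x) (hfy_nonneg : ∀ i y, 0 ≤ fy i y)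
    (hfx_one : ∀ i, ∫ x, fx i x ∂μ = 1) (hfy_one : ∀ i, ∫ y, fy i y ∂ν = 1)
    -- sufficient condition: each component completely dominates somewhere
    (hsuff_x : ∀ i : Fin C,
      essSup (fun x => w i * fx i x / (∑ k, w k * fx k x))
          (μ.withDensity (fun x => ENNReal.ofReal (∑ k, w k * fx k x))) = 1)
    (hsuff_y : ∀ i : Fin C,
      essSup (fun y => w i * fy i y / (∑ k, w k * fy k y))
          (ν.withDensity (fun y => ENNReal.ofReal (∑ k, w k * fy k y))) = 1) :
    -- identifiability up to permutation of the component labels: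
    ∀ (w' : Fin C → ℝ) (gx : Fin C → Xt → ℝ) (gy : Fin C → Yt → ℝ),
      (∀ i, 0 ≤ w' i) → ∑ i, w' i = 1 →
      (∀ i, Measurable (gx i)) → (∀ i, Measurable (gy i)) →
      (∀ i x, 0 ≤ gx i x) → (∀ i y, 0 ≤ gy i y) →
      (∀ i, ∫ x, gx i x ∂μ = 1) → (∀ i, ∫ y, gy i y ∂ν = 1) →
      (∀ᵐ p ∂(μ.prod ν),
        ∑ i, w' i * gx i p.1 * gy i p.2 = ∑ i, w i * fx i p.1 * fy i p.2) →
      ∃ σ : Equiv.Perm (Fin C),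
        ∀ i, w' i = w (σ i) ∧ gx i =ᵐ[μ] fx (σ i) ∧ gy i =ᵐ[ν] fy (σ i) :=
  statement_13_general μ ν w fx fy hw_nonneg hfx_meas hfy_meas hfx_nonneg hfy_nonneg hfx_one hfy_one
    hsuff_x hsuff_y
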